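/- Let ψ be an adjoint solution of the 2-D Euler adjoint equation on both sides of a shock Σ with [ψ] = 0 and [∂_tψ] = 0 along Σ. Then the jump of the adjoint normal derivatives satisfies [v_n ∂_nψ₁] − H[v_n ∂_nψ₄] = 0, where H is the (continuous) total enthalpy at the shock. -/

import Mathlib

/-- The 2-D Euler flux Jacobian in the direction `(nx, ny)`:  `An γ u v H nx ny = nx • A + ny • B`,
where `A`, `B` are the Jacobians of the Euler fluxes w.r.t. conservative variables. -/
noncomputable def An (γ u v H nx ny : ℝ) : Matrix (Fin 4) (Fin 4) ℝ :=
  !![0, nx, ny, 0;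
     (γ-1)*((u^2+v^2)/2)*nx - u*(u*nx+v*ny), (u*nx+v*ny)-(γ-2)*u*nx, u*ny-(γ-1)*v*nx, (γ-1)*nx;
     (γ-1)*((u^2+v^2)/2)*ny - v*(u*nx+v*ny), v*nx-(γ-1)*u*ny, (u*nx+v*ny)-(γ-2)*v*ny, (γ-1)*ny;
     ((γ-1)*((u^2+v^2)/2)-H)*(u*nx+v*ny), H*nx-(γ-1)*u*(u*nx+v*ny), H*ny-(γ-1)*v*(u*nx+v*ny), γ*(u*nx+v*ny)]

/-!
Dotting the adjoint system with the weights `(2, u, v, 0)` (twice the combination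
(a) + (u/2)(b) + (v/2)(c)) kills every entry except the first and the last: in any direction
`(nx, ny)` the flux Jacobian sends these weights to `(u nx + v ny) • (1, 0, 0, -H)`. In
shock-attached coordinates the adjoint equation on each side therefore reduces to the scalar
relation `vₙ (∂ₙψ₁ - H ∂ₙψ₄) + v_t (∂_tψ₁ - H ∂_tψ₄) = 0`. Since `v_t`, `H` and `∂_tψ` are
continuous across the shock, the tangential terms cancel in the jump.
-/

open Matrix

theorem An_mulVec_enthalpy_weights (γ u v H nx ny : ℝ) :
    An γ u v H nx ny *ᵥ ![2, u, v, 0] = (u * nx + v * ny) • ![1, 0, 0, -H] := by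
  ext i
  fin_cases i <;>
    simp [An, mulVec, dotProduct, Fin.sum_univ_four] <;> ring

theorem enthalpy_weights_dotProduct_adjoint (γ u v H nx ny : ℝ) (Dn Dt : Fin 4 → ℝ) :
    ![2, u, v, 0] ⬝ᵥ ((An γ u v H nx ny)ᵀ *ᵥ Dn + (An γ u v H (-ny) nx)ᵀ *ᵥ Dt) =
      (u * nx + v * ny) * (Dn 0 - H * Dn 3) + (-u * ny + v * nx) * (Dt 0 - H * Dt 3) := by
  simp only [dotProduct_add, dotProduct_mulVec, vecMul_transpose,
    An_mulVec_enthalpy_weights, smul_dotProduct]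
  simp [dotProduct, Fin.sum_univ_four]
  ring

theorem adjoint_shock_side_relation (γ H vn vt nx ny : ℝ) (Dn Dt : Fin 4 → ℝ)
    (hn : nx ^ 2 + ny ^ 2 = 1)
    (hadj : (An γ (vn*nx - vt*ny) (vn*ny + vt*nx) H nx ny)ᵀ *ᵥ Dn
        + (An γ (vn*nx - vt*ny) (vn*ny + vt*nx) H (-ny) nx)ᵀ *ᵥ Dt = 0) :
    vn * (Dn 0 - H * Dn 3) + vt * (Dt 0 - H * Dt 3) = 0 := by
  have h := enthalpy_weights_dotProduct_adjoint γ (vn*nx - vt*ny) (vn*ny + vt*nx) H nx ny Dn Dt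
  rw [hadj, dotProduct_zero] at h
  linear_combination -h - (vn * (Dn 0 - H * Dn 3) + vt * (Dt 0 - H * Dt 3)) * hn

/- Dnp/Dnm are the one-sided normal derivative vectors of ψ, Dt the common tangential
derivative; the velocity on each side is vₙ n + v_t t with t = (−n_y, n_x). -/
theorem adjoint_shock_jump_relation_1_general (γ H vt nx ny vnp vnm : ℝ)
    (Dnp Dnm Dt : Fin 4 → ℝ)
    (hn : nx^2 + ny^2 = 1)
    (hadjp : (An γ (vnp*nx - vt*ny) (vnp*ny + vt*nx) H nx ny).transpose.mulVec Dnp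
           + (An γ (vnp*nx - vt*ny) (vnp*ny + vt*nx) H (-ny) nx).transpose.mulVec Dt = 0)
    (hadjm : (An γ (vnm*nx - vt*ny) (vnm*ny + vt*nx) H nx ny).transpose.mulVec Dnm
           + (An γ (vnm*nx - vt*ny) (vnm*ny + vt*nx) H (-ny) nx).transpose.mulVec Dt = 0) :
    (vnp * Dnp 0 - vnm * Dnm 0) - H * (vnp * Dnp 3 - vnm * Dnm 3) = 0 := by
  linear_combination adjoint_shock_side_relation γ H vnp vt nx ny Dnp Dt hn hadjp
    - adjoint_shock_side_relation γ H vnm vt nx ny Dnm Dt hn hadjm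

theorem adjoint_shock_jump_relation_1 (γ H vt nx ny vnp vnm ρp ρm : ℝ)
    (Dnp Dnm Dt : Fin 4 → ℝ)
    (hγ : 1 < γ) (hn : nx^2 + ny^2 = 1)
    (hρp : 0 < ρp) (hρm : 0 < ρm)
    (hmass : ρp * vnp = ρm * vnm)
    (hadjp : (An γ (vnp*nx - vt*ny) (vnp*ny + vt*nx) H nx ny).transpose.mulVec Dnp
           + (An γ (vnp*nx - vt*ny) (vnp*ny + vt*nx) H (-ny) nx).transpose.mulVec Dt = 0)
    (hadjm : (An γ (vnm*nx - vt*ny) (vnm*ny + vt*nx) H nx ny).transpose.mulVec Dnm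
           + (An γ (vnm*nx - vt*ny) (vnm*ny + vt*nx) H (-ny) nx).transpose.mulVec Dt = 0) :
    (vnp * Dnp 0 - vnm * Dnm 0) - H * (vnp * Dnp 3 - vnm * Dnm 3) = 0 :=
  adjoint_shock_jump_relation_1_general γ H vt nx ny vnp vnm Dnp Dnm Dt hn hadjp hadjm
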